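/- Let H be a wide subgroupoid of a groupoid G on a topological space X. If all transitivity components of H are connected, then H = glob(loc(H)). Conversely, if H = glob(loc(H)) and the transitivity components of H are closed in X, then they are connected. -/

import Mathlib

open CategoryTheory

universe u v

variable {X : Type u} [TopologicalSpace X] [Groupoid.{v} X]

/-- The set of arrows of a groupoid `G` with object set `X`. -/
abbrev Arr (X : Type u) [Groupoid.{v} X] : Type (max u v) := Σ x y : X, x ⟶ y

/-- The arrow `⟨x, y, f⟩` determined by `f : x ⟶ y`. -/
def mkArr {x y : X} (f : x ⟶ y) : Arr X := ⟨x, y, f⟩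

/-- The restriction `S|V` of a set of arrows to those with source and target in `V`. -/
def rstr (S : Set (Arr X)) (V : Set X) : Set (Arr X) :=
  {a | a ∈ S ∧ a.1 ∈ V ∧ a.2.1 ∈ V}

/-- `S` is (the arrow set of) a wide subgroupoid of `G|U`: all its arrows have source
and target in `U`, it contains all identities of points of `U`, and it is closed
under composition and inverse. -/
def IsSubgpdOn (U : Set X) (S : Set (Arr X)) : Prop :=
  (∀ a ∈ S, a.1 ∈ U ∧ a.2.1 ∈ U) ∧
  (∀ x ∈ U, mkArr (𝟙 x) ∈ S) ∧
  (∀ ⦃x y z : X⦄ (f : x ⟶ y) (g : y ⟶ z), mkArr f ∈ S → mkArr g ∈ S →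
    mkArr (f ≫ g) ∈ S) ∧
  (∀ ⦃x y : X⦄ (f : x ⟶ y), mkArr f ∈ S → mkArr (Groupoid.inv f) ∈ S)

/-- The wide subgroupoid of `G|U` generated by a set `S` of arrows. -/
def gen (U : Set X) (S : Set (Arr X)) : Set (Arr X) :=
  ⋂₀ {T | IsSubgpdOn U T ∧ S ⊆ T}

/-- An atlas `{(Uₓ, Hₓ) : x ∈ Y}` for a local subgroupoid of `G` over the open set `Y`:
each `Uₓ` is an open neighbourhood of `x` in `Y`, `Hₓ` is a wide subgroupoid of `G|Uₓ`,
and any two charts agree locally (local compatibility). -/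
def IsAtlas (Y : Set X) (U : X → Set X) (H : X → Set (Arr X)) : Prop :=
  (∀ x ∈ Y, IsOpen (U x) ∧ x ∈ U x ∧ U x ⊆ Y ∧ IsSubgpdOn (U x) (H x)) ∧
  (∀ x ∈ Y, ∀ y ∈ Y, ∀ z ∈ U x ∩ U y, ∃ W, IsOpen W ∧ z ∈ W ∧ W ⊆ U x ∩ U y ∧
    rstr (H x) W = rstr (H y) W)

/-- `s ≤ loc(K)` for the local subgroupoid `s` given by the atlas `(U, H)` over `Y`:
at every point of `Y` the germ of the chart is contained in the germ of `K`. -/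
def leLoc (Y : Set X) (U : X → Set X) (H : X → Set (Arr X)) (K : Set (Arr X)) : Prop :=
  ∀ x ∈ Y, ∃ W, IsOpen W ∧ x ∈ W ∧ W ⊆ U x ∩ Y ∧ rstr (H x) W ⊆ rstr K W

/-- `glob(s)`: the intersection of all wide subgroupoids `K` of `G|Y`
with `s ≤ loc(K)`. -/
def glob (Y : Set X) (U : X → Set X) (H : X → Set (Arr X)) : Set (Arr X) :=
  ⋂₀ {K | IsSubgpdOn Y K ∧ leLoc Y U H K}

/-- The transitivity component of `x` in the (sub)groupoid with arrow set `S`. -/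
def tcomp (S : Set (Arr X)) (x : X) : Set X := {y | ∃ f : x ⟶ y, mkArr f ∈ S}

/-- `s` (given by the atlas `(U,H)` over `Y`) is coherent: `s ≤ loc(glob(s))`. -/
def Coherent (Y : Set X) (U : X → Set X) (H : X → Set (Arr X)) : Prop :=
  leLoc Y U H (glob Y U H)

/-- `s` is globally coherent: `s = loc(glob(s))`, i.e. at each point the germ of the
chart equals the germ of `glob(s)`. -/
def GloballyCoherent (Y : Set X) (U : X → Set X) (H : X → Set (Arr X)) : Prop :=
  ∀ x ∈ Y, ∃ W, IsOpen W ∧ x ∈ W ∧ W ⊆ U x ∩ Y ∧ rstr (H x) W = rstr (glob Y U H) W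

/-!
If the components are connected and `K` is a wide subgroupoid containing `H` locally, the
relation "every `H`-arrow from `p` to `q` lies in `K`" is transitive on a component and holds
between nearby points, so it holds on the whole component; hence `H ⊆ K`, i.e. `H ⊆ glob(loc H)`.
Conversely, if a closed component `C` splits into relatively clopen pieces `A` and `C \ A`, the
`H`-arrows not crossing the boundary of `A` form a wide subgroupoid containing `H` locally (near
a point use the complement of `A` or of `C \ A`). If `H = glob(loc H)` it contains all of `H`,
so no `H`-arrow joins `A` to `C \ A`, and one of the two pieces is empty.
-/

open Set Topology

def nonCrossing (H : Set (Arr X)) (A : Set X) : Set (Arr X) :=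
  {a | a ∈ H ∧ (a.1 ∈ A ↔ a.2.1 ∈ A)}

namespace IsSubgpdOn

omit [TopologicalSpace X]

variable {U : Set X} {H : Set (Arr X)}

lemma id_mem (hH : IsSubgpdOn U H) {x : X} (hx : x ∈ U) : mkArr (𝟙 x) ∈ H :=
  hH.2.1 x hx

lemma comp_mem (hH : IsSubgpdOn U H) {x y z : X} {f : x ⟶ y} {g : y ⟶ z}
    (hf : mkArr f ∈ H) (hg : mkArr g ∈ H) : mkArr (f ≫ g) ∈ H :=
  hH.2.2.1 f g hf hg

lemma inv_mem (hH : IsSubgpdOn U H) {x y : X} {f : x ⟶ y} (hf : mkArr f ∈ H) :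
    mkArr (Groupoid.inv f) ∈ H :=
  hH.2.2.2 f hf

lemma mem_of_inv_comp_mem (hH : IsSubgpdOn U H) {x y z : X} {f : x ⟶ y} {g : x ⟶ z}
    (hf : mkArr f ∈ H) (hfg : mkArr (Groupoid.inv f ≫ g) ∈ H) : mkArr g ∈ H := by
  simpa only [Groupoid.inv_eq_inv, IsIso.hom_inv_id_assoc] using hH.comp_mem hf hfg

lemma mem_tcomp_self (hH : IsSubgpdOn U H) {x : X} (hx : x ∈ U) : x ∈ tcomp H x :=
  ⟨𝟙 x, hH.id_mem hx⟩

lemma exists_mem_of_mem_tcomp (hH : IsSubgpdOn U H) {x p q : X} (hp : p ∈ tcomp H x)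
    (hq : q ∈ tcomp H x) : ∃ a : p ⟶ q, mkArr a ∈ H := by
  obtain ⟨f, hf⟩ := hp
  obtain ⟨g, hg⟩ := hq
  exact ⟨Groupoid.inv f ≫ g, hH.comp_mem (hH.inv_mem hf) hg⟩

lemma mem_tcomp_iff (hH : IsSubgpdOn U H) (x : X) {p q : X} {f : p ⟶ q} (hf : mkArr f ∈ H) :
    p ∈ tcomp H x ↔ q ∈ tcomp H x :=
  ⟨fun ⟨g, hg⟩ => ⟨g ≫ f, hH.comp_mem hg hf⟩,
    fun ⟨g, hg⟩ => ⟨g ≫ Groupoid.inv f, hH.comp_mem hg (hH.inv_mem hf)⟩⟩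

lemma nonCrossing (hH : IsSubgpdOn U H) (A : Set X) : IsSubgpdOn U (nonCrossing H A) :=
  ⟨fun a ha => hH.1 a ha.1, fun _ hx => ⟨hH.id_mem hx, Iff.rfl⟩,
    fun _ _ _ _ _ hf hg => ⟨hH.comp_mem hf.1 hg.1, hf.2.trans hg.2⟩,
    fun _ _ _ hf => ⟨hH.inv_mem hf.1, hf.2.symm⟩⟩

end IsSubgpdOn

section Globalisation

variable {H : Set (Arr X)}

/-- `loc(H)` is represented by the atlas all of whose charts are `(X, H)`. -/
abbrev globLoc (H : Set (Arr X)) : Set (Arr X) :=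
  glob univ (fun _ => univ) (fun _ => H)

lemma leLoc_univ_iff {K : Set (Arr X)} :
    leLoc univ (fun _ => univ) (fun _ => H) K ↔ ∀ z, ∃ W ∈ 𝓝 z, rstr H W ⊆ K := by
  refine ⟨fun h z => ?_, fun h z _ => ?_⟩
  · obtain ⟨W, hWo, hzW, -, hW⟩ := h z trivial
    exact ⟨W, hWo.mem_nhds hzW, fun a ha => (hW ha).1⟩
  · obtain ⟨W, hW, hWK⟩ := h z
    obtain ⟨V, hVW, hVo, hzV⟩ := mem_nhds_iff.1 hW
    exact ⟨V, hVo, hzV, by simp, fun a ⟨haH, hs, ht⟩ =>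
      ⟨hWK ⟨haH, hVW hs, hVW ht⟩, hs, ht⟩⟩

lemma globLoc_subset (hH : IsSubgpdOn univ H) : globLoc H ⊆ H :=
  sInter_subset_of_mem ⟨hH, leLoc_univ_iff.2 fun _ => ⟨univ, Filter.univ_mem, fun _ ha => ha.1⟩⟩

lemma subset_globLoc_iff :
    H ⊆ globLoc H ↔ ∀ K, IsSubgpdOn univ K → (∀ z, ∃ W ∈ 𝓝 z, rstr H W ⊆ K) → H ⊆ K := by
  simp only [globLoc, glob, subset_sInter_iff, mem_ofPred_eq, and_imp, leLoc_univ_iff]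

theorem subset_of_locally_subset_of_isPreconnected {K : Set (Arr X)} (hH : IsSubgpdOn univ H)
    (hK : IsSubgpdOn univ K) (hconn : ∀ x, IsPreconnected (tcomp H x))
    (hloc : ∀ z, ∃ W ∈ 𝓝 z, rstr H W ⊆ K) : H ⊆ K := by
  rintro ⟨x, y, f⟩ hf
  choose W hW hWK using hloc
  let P (p q : X) : Prop := ∀ g : p ⟶ q, mkArr g ∈ H → mkArr g ∈ K
  have hlocal : ∀ z ∈ tcomp H x, ∀ᶠ w in 𝓝[tcomp H x] z, P z w ∧ P w z := by
    intro z _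
    filter_upwards [nhdsWithin_le_nhds (hW z)] with w hw
    have hz := mem_of_mem_nhds (hW z)
    exact ⟨fun g hg => hWK z ⟨hg, hz, hw⟩, fun g hg => hWK z ⟨hg, hw, hz⟩⟩
  have htrans : ∀ p q r, p ∈ tcomp H x → q ∈ tcomp H x → r ∈ tcomp H x →
      P p q → P q r → P p r := by
    intro p q r hp hq _ hpq hqr g hg
    obtain ⟨a, ha⟩ := hH.exists_mem_of_mem_tcomp hp hq
    exact hK.mem_of_inv_comp_mem (hpq a ha) (hqr _ (hH.comp_mem (hH.inv_mem ha) hg))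
  exact (hconn x).induction₂' P hlocal htrans (hH.mem_tcomp_self trivial) ⟨f, hf⟩ f hf

theorem subset_globLoc_of_isPreconnected (hH : IsSubgpdOn univ H)
    (hconn : ∀ x, IsPreconnected (tcomp H x)) : H ⊆ globLoc H :=
  subset_globLoc_iff.2 fun _ hK => subset_of_locally_subset_of_isPreconnected hH hK hconn

lemma locally_subset_nonCrossing (hH : IsSubgpdOn univ H) {x : X} {A : Set X}
    (hAC : A ⊆ tcomp H x) (hA : IsClosed A) (hCA : IsClosed (tcomp H x \ A)) (z : X) :
    ∃ W ∈ 𝓝 z, rstr H W ⊆ nonCrossing H A := by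
  by_cases hz : z ∈ A
  · refine ⟨(tcomp H x \ A)ᶜ, hCA.isOpen_compl.mem_nhds fun h => h.2 hz, ?_⟩
    rintro ⟨p, q, f⟩ ⟨hf, hp, hq⟩
    have hpq := hH.mem_tcomp_iff x hf
    refine ⟨hf, fun hpA => ?_, fun hqA => ?_⟩
    · by_contra hqA
      exact hq ⟨hpq.1 (hAC hpA), hqA⟩
    · by_contra hpA
      exact hp ⟨hpq.2 (hAC hqA), hpA⟩
  · exact ⟨Aᶜ, hA.isOpen_compl.mem_nhds hz, fun _ ⟨hf, hp, hq⟩ => ⟨hf, iff_of_false hp hq⟩⟩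

theorem isPreconnected_tcomp_of_subset_globLoc (hH : IsSubgpdOn univ H)
    (hglob : H ⊆ globLoc H) {x : X} (hcl : IsClosed (tcomp H x)) :
    IsPreconnected (tcomp H x) := by
  rw [isPreconnected_iff_subset_of_fully_disjoint_closed hcl]
  intro u v hu hv hsub hdisj
  set C := tcomp H x
  have hCu : C \ (C ∩ u) = C ∩ v := by
    ext c
    constructor
    · rintro ⟨hc, hcu⟩
      exact ⟨hc, (hsub hc).resolve_left fun h => hcu ⟨hc, h⟩⟩
    · rintro ⟨hc, hcv⟩
      exact ⟨hc, fun h => disjoint_left.1 hdisj h.2 hcv⟩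
  have hsat : H ⊆ nonCrossing H (C ∩ u) :=
    subset_globLoc_iff.1 hglob _ (hH.nonCrossing _) <|
      locally_subset_nonCrossing hH inter_subset_left (hcl.inter hu) (hCu ▸ hcl.inter hv)
  by_cases hne : (C ∩ u).Nonempty
  · obtain ⟨a, haC, hau⟩ := hne
    refine Or.inl fun c hc => ?_
    obtain ⟨g, hg⟩ := hH.exists_mem_of_mem_tcomp haC hc
    exact ((hsat hg).2.1 ⟨haC, hau⟩).2
  · exact Or.inr fun c hc => (hsub hc).resolve_left fun hcu => hne ⟨c, hc, hcu⟩

end Globalisation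

/-- Let `H` be a wide subgroupoid of `G` on `X`.  If all transitivity components of
`H` are connected, then `H = glob(loc(H))`.  Conversely, if `H = glob(loc(H))` and
the transitivity components of `H` are closed in `X`, then they are connected. -/
theorem stmt15 (H : Set (Arr X)) (hH : IsSubgpdOn Set.univ H) :
    ((∀ x : X, IsConnected (tcomp H x)) →
      H = glob Set.univ (fun _ => Set.univ) (fun _ => H)) ∧
    (H = glob Set.univ (fun _ => Set.univ) (fun _ => H) →
      (∀ x : X, IsClosed (tcomp H x)) → ∀ x : X, IsConnected (tcomp H x)) := by
  refine ⟨fun hconn => ?_, fun hglob hcl x => ?_⟩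
  · exact (subset_globLoc_of_isPreconnected hH fun x => (hconn x).isPreconnected).antisymm
      (globLoc_subset hH)
  · exact ⟨⟨x, hH.mem_tcomp_self trivial⟩,
      isPreconnected_tcomp_of_subset_globLoc hH hglob.subset (hcl x)⟩
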